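/- arXiv:1302.5372 — 3 statements merged into one kernel-verified Lean document; each statement's English description precedes it below -/
import Mathlib

section
/- For every f ∈ K[x_0,…,x_n], every w ∈ Γ^{n+1}, and every v ∈ Γ^{n+1}, there exists ε > 0 such that in_v(in_w(f)) = in_{w+ε'v}(f) for all ε' ∈ Γ with 0 < ε' < ε. -/
open MvPolynomial
open scoped Classical

noncomputable section

/-- Dot product `w·u` of a real weight vector with a nonnegative exponent vector. -/
def dotN {m : ℕ} (w : Fin m → ℝ) (u : Fin m →₀ ℕ) : ℝ := ∑ i, w i * (u i : ℝ)

/-- Dot product `w·u` of a real weight vector with an integer exponent vector. -/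
def dotZ {n : ℕ} (w : Fin n → ℝ) (u : Fin n → ℤ) : ℝ := ∑ i, w i * (u i : ℝ)

/-- Dot product of two real vectors. -/
def dotR {m : ℕ} (c x : Fin m → ℝ) : ℝ := ∑ i, c i * x i

/-- A field `K` together with: a nontrivial real-valued (additive) valuation
`val : K* → ℝ` (recorded as a function on `K`, constrained only at nonzero elements);
a residue field `𝕜` with the reduction map `res : K → 𝕜` (the canonical map
`R → 𝕜 = R/𝔪` on the valuation ring `R = {a : val a ≥ 0}`, junk elsewhere); and a fixed
splitting `t` of the valuation, i.e. a group-homomorphic section `w ↦ t^w` of `val`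
defined on the value group `Γ = im val`. -/
structure ValSetup (K 𝕜 : Type) [Field K] [Field 𝕜] where
  val : K → ℝ
  val_mul : ∀ {a b : K}, a ≠ 0 → b ≠ 0 → val (a * b) = val a + val b
  val_add : ∀ {a b : K}, a ≠ 0 → b ≠ 0 → a + b ≠ 0 → min (val a) (val b) ≤ val (a + b)
  val_one : val 1 = 0
  val_nontrivial : ∃ a : K, a ≠ 0 ∧ val a ≠ 0
  res : K → 𝕜
  res_add : ∀ {a b : K}, (a = 0 ∨ 0 ≤ val a) → (b = 0 ∨ 0 ≤ val b) → res (a + b) = res a + res b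
  res_mul : ∀ {a b : K}, (a = 0 ∨ 0 ≤ val a) → (b = 0 ∨ 0 ≤ val b) → res (a * b) = res a * res b
  res_one : res 1 = 1
  res_zero : res 0 = 0
  res_eq_zero_iff : ∀ {a : K}, a ≠ 0 → 0 ≤ val a → (res a = 0 ↔ 0 < val a)
  res_surjective : ∀ c : 𝕜, ∃ a : K, (a = 0 ∨ 0 ≤ val a) ∧ res a = c
  t : ℝ → K
  t_ne_zero : ∀ {r : ℝ}, (∃ a : K, a ≠ 0 ∧ val a = r) → t r ≠ 0
  t_add : ∀ {r₁ r₂ : ℝ}, (∃ a : K, a ≠ 0 ∧ val a = r₁) → (∃ a : K, a ≠ 0 ∧ val a = r₂) →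
    t (r₁ + r₂) = t r₁ * t r₂
  val_t : ∀ {r : ℝ}, (∃ a : K, a ≠ 0 ∧ val a = r) → val (t r) = r

namespace ValSetup

variable {K 𝕜 : Type} [Field K] [Field 𝕜]

/-- The value group `Γ = val(K*) ⊆ ℝ`. -/
def Gamma (V : ValSetup K 𝕜) : Set ℝ := {r : ℝ | ∃ a : K, a ≠ 0 ∧ V.val a = r}

/-- `trop(f)(w) = min { val(c_u) + w·u : c_u ≠ 0 }` for `f = Σ_u c_u x^u ∈ K[x_0,…,x_{m-1}]`. -/
def trop (V : ValSetup K 𝕜) {m : ℕ} (f : MvPolynomial (Fin m) K) (w : Fin m → ℝ) : ℝ :=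
  sInf ((fun u => V.val (coeff u f) + dotN w u) '' (f.support : Set (Fin m →₀ ℕ)))

/-- The initial form `in_w(f) = Σ_{val(c_u)+w·u = trop(f)(w)} (t^{-val(c_u)} c_u)‾ x^u`
in `𝕜[x_0,…,x_{m-1}]`. -/
def initialForm (V : ValSetup K 𝕜) {m : ℕ} (w : Fin m → ℝ) (f : MvPolynomial (Fin m) K) :
    MvPolynomial (Fin m) 𝕜 :=
  ∑ u ∈ f.support.filter (fun u => V.val (coeff u f) + dotN w u = V.trop f w),
    monomial u (V.res (V.t (-(V.val (coeff u f))) * coeff u f))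

/-- The initial ideal `in_w(I) = ⟨in_w(f) : f ∈ I⟩ ⊆ 𝕜[x_0,…,x_{m-1}]`. -/
def initialIdeal (V : ValSetup K 𝕜) {m : ℕ} (w : Fin m → ℝ)
    (I : Ideal (MvPolynomial (Fin m) K)) : Ideal (MvPolynomial (Fin m) 𝕜) :=
  Ideal.span {g | ∃ f ∈ I, g = V.initialForm w f}

/-- The Gröbner region `C_I[w] = {w' ∈ Γ^m : in_{w'}(I) = in_w(I)}`. -/
def groebnerRegion (V : ValSetup K 𝕜) {m : ℕ} (I : Ideal (MvPolynomial (Fin m) K))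
    (w : Fin m → ℝ) : Set (Fin m → ℝ) :=
  {w' | (∀ i, w' i ∈ V.Gamma) ∧ V.initialIdeal w' I = V.initialIdeal w I}

end ValSetup

/-- `trop(g)(v) = min { v·u : c_u ≠ 0 }` for `g ∈ 𝕜[x]`, w.r.t. the trivial valuation on `𝕜`. -/
def tropTriv {𝕜 : Type} [Field 𝕜] {m : ℕ} (g : MvPolynomial (Fin m) 𝕜) (v : Fin m → ℝ) : ℝ :=
  sInf ((fun u => dotN v u) '' (g.support : Set (Fin m →₀ ℕ)))

/-- Initial form `in_v(g)`, w.r.t. the trivial valuation on the residue field: the sum of the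
terms of `g` whose exponents `u` minimize `v·u`. -/
def initialFormTriv {𝕜 : Type} [Field 𝕜] {m : ℕ} (v : Fin m → ℝ) (g : MvPolynomial (Fin m) 𝕜) :
    MvPolynomial (Fin m) 𝕜 :=
  ∑ u ∈ g.support.filter (fun u => dotN v u = tropTriv g v), monomial u (coeff u g)

/-- Initial ideal `in_v(J) = ⟨in_v(g) : g ∈ J⟩` w.r.t. the trivial valuation. -/
def initialIdealTriv {𝕜 : Type} [Field 𝕜] {m : ℕ} (v : Fin m → ℝ)
    (J : Ideal (MvPolynomial (Fin m) 𝕜)) : Ideal (MvPolynomial (Fin m) 𝕜) :=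
  Ideal.span {h | ∃ g ∈ J, h = initialFormTriv v g}

/-- A homogeneous ideal of `R[x_0,…,x_{m-1}]`: one containing all homogeneous components of
its elements. -/
def IsHomogIdeal {R : Type} [CommSemiring R] {m : ℕ} (I : Ideal (MvPolynomial (Fin m) R)) :
    Prop :=
  ∀ f ∈ I, ∀ d : ℕ, homogeneousComponent d f ∈ I

/-- A monomial ideal: an ideal generated by monomials. -/
def IsMonomialIdeal {R : Type} [CommSemiring R] {m : ℕ} (J : Ideal (MvPolynomial (Fin m) R)) :
    Prop :=
  ∃ S : Set (Fin m →₀ ℕ), J = Ideal.span ((fun u => (monomial u 1 : MvPolynomial (Fin m) R)) '' S)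

/-! Both sides are sums of the same reduced coefficients `(t^{-val c_u} c_u)‾ x^u`, over sets of
exponents: `in_v(in_w f)` keeps the `u` minimizing `v·u` among those minimizing
`val c_u + w·u`, and `in_{w+εv} f` keeps the minimizers of `val c_u + w·u + ε (v·u)`. These sets
agree for all small `ε > 0`: an exponent that does not minimize the first term loses to one that
does by a fixed positive gap, which `ε (v·u)` cannot close once `ε` is small. -/

open Filter Topology

namespace Finset

variable {ι β : Type*}

def minimizers [Preorder β] (s : Finset ι) (φ : ι → β) : Finset ι :=
  {u ∈ s | IsMinOn φ s u}

@[simp]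
theorem mem_minimizers [Preorder β] {s : Finset ι} {φ : ι → β} {u : ι} :
    u ∈ s.minimizers φ ↔ u ∈ s ∧ ∀ x ∈ s, φ u ≤ φ x := by
  simp [minimizers, isMinOn_iff]

theorem minimizers_nonempty [LinearOrder β] {s : Finset ι} (hs : s.Nonempty) (φ : ι → β) :
    (s.minimizers φ).Nonempty := by
  obtain ⟨u, hu, hmin⟩ := s.exists_min_image φ hs
  exact ⟨u, mem_minimizers.2 ⟨hu, hmin⟩⟩

theorem filter_eq_csInf_image [ConditionallyCompleteLinearOrder β] (s : Finset ι) (φ : ι → β) :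
    {u ∈ s | φ u = sInf (φ '' s)} = s.minimizers φ := by
  ext u
  simp only [mem_filter, mem_minimizers, and_congr_right_iff]
  intro hu
  constructor
  · intro h x hx
    rw [h]
    exact csInf_le (s.finite_toSet.image φ).bddBelow (Set.mem_image_of_mem φ hx)
  · intro h
    refine (IsLeast.csInf_eq ⟨Set.mem_image_of_mem φ hu, ?_⟩).symm
    rintro _ ⟨x, hx, rfl⟩
    exact h x hx

theorem eventually_minimizers_add_mul (s : Finset ι) (A B : ι → ℝ) :
    ∀ᶠ ε in 𝓝[>] (0 : ℝ),
      s.minimizers (fun u => A u + ε * B u) = (s.minimizers A).minimizers B := by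
  have hstrict : ∀ᶠ ε in 𝓝[>] (0 : ℝ), ∀ u ∈ s \ s.minimizers A, ∀ u₀ ∈ s.minimizers A,
      A u₀ + ε * B u₀ < A u + ε * B u := by
    refine (eventually_all_finset _).2 fun u hu => (eventually_all_finset _).2 fun u₀ hu₀ => ?_
    obtain ⟨hus, hnot⟩ := mem_sdiff.1 hu
    have hgap : A u₀ < A u := by
      refine lt_of_not_ge fun hle => hnot (mem_minimizers.2 ⟨hus, fun x hx => ?_⟩)
      exact hle.trans ((mem_minimizers.1 hu₀).2 x hx)
    refine nhdsWithin_le_nhds (Tendsto.eventually_lt ?_ ?_ (by simpa using hgap)) <;>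
      exact Continuous.tendsto' (by fun_prop) _ _ (by simp)
  filter_upwards [hstrict, self_mem_nhdsWithin] with ε hε (hpos : 0 < ε)
  ext u
  rw [mem_minimizers, mem_minimizers]
  constructor
  · rintro ⟨hu, hmin⟩
    have huA : u ∈ s.minimizers A := by
      by_contra hnot
      obtain ⟨u₀, hu₀⟩ := minimizers_nonempty ⟨u, hu⟩ A
      exact (hε u (mem_sdiff.2 ⟨hu, hnot⟩) u₀ hu₀).not_ge (hmin u₀ (mem_minimizers.1 hu₀).1)
    refine ⟨huA, fun x hxA => ?_⟩
    obtain ⟨hx, hxmin⟩ := mem_minimizers.1 hxA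
    have hAx : A u = A x := le_antisymm ((mem_minimizers.1 huA).2 x hx) (hxmin u hu)
    have := hmin x hx
    exact le_of_mul_le_mul_left (by linarith) hpos
  · rintro ⟨huA, hmin⟩
    obtain ⟨hu, humin⟩ := mem_minimizers.1 huA
    refine ⟨hu, fun x hx => ?_⟩
    by_cases hxA : x ∈ s.minimizers A
    · have hAx : A u = A x := le_antisymm (humin x hx) ((mem_minimizers.1 hxA).2 u hu)
      have := mul_le_mul_of_nonneg_left (hmin x hxA) hpos.le
      linarith
    · exact (hε x (mem_sdiff.2 ⟨hx, hxA⟩) u huA).le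

end Finset

theorem dotN_add_smul {m : ℕ} (w v : Fin m → ℝ) (e : ℝ) (u : Fin m →₀ ℕ) :
    dotN (w + e • v) u = dotN w u + e * dotN v u := by
  simp only [dotN, Pi.add_apply, Pi.smul_apply, smul_eq_mul, add_mul, Finset.sum_add_distrib,
    Finset.mul_sum, mul_assoc]

theorem MvPolynomial.support_sum_monomial {R σ : Type*} [CommSemiring R] (S : Finset (σ →₀ ℕ))
    (c : (σ →₀ ℕ) → R) (hc : ∀ u ∈ S, c u ≠ 0) :
    (∑ u ∈ S, monomial u (c u)).support = S := by
  ext u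
  rw [mem_support_iff, coeff_sum]
  simp only [coeff_monomial, Finset.sum_ite_eq', ne_eq]
  split_ifs with h <;> simp [h, hc]

theorem initialFormTriv_sum_monomial {𝕜 : Type} [Field 𝕜] {m : ℕ} (v : Fin m → ℝ)
    (S : Finset (Fin m →₀ ℕ)) (c : (Fin m →₀ ℕ) → 𝕜) (hc : ∀ u ∈ S, c u ≠ 0) :
    initialFormTriv v (∑ u ∈ S, monomial u (c u)) =
      ∑ u ∈ S.minimizers (dotN v), monomial u (c u) := by
  rw [initialFormTriv, tropTriv, support_sum_monomial S c hc, Finset.filter_eq_csInf_image]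
  refine Finset.sum_congr rfl fun u hu => ?_
  rw [coeff_sum]
  simp [coeff_monomial, (Finset.mem_minimizers.1 hu).1]

namespace ValSetup

variable {K 𝕜 : Type} [Field K] [Field 𝕜]

theorem res_t_neg_val_mul_ne_zero (V : ValSetup K 𝕜) {c : K} (hc : c ≠ 0) :
    V.res (V.t (-V.val c) * c) ≠ 0 := by
  have hval_inv : V.val c⁻¹ = -V.val c := by
    have h := V.val_mul hc (inv_ne_zero hc)
    rw [mul_inv_cancel₀ hc, V.val_one] at h
    linarith
  have hΓ : ∃ a : K, a ≠ 0 ∧ V.val a = -V.val c := ⟨c⁻¹, inv_ne_zero hc, hval_inv⟩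
  have ht := V.t_ne_zero hΓ
  have hunit : V.val (V.t (-V.val c) * c) = 0 := by
    rw [V.val_mul ht hc, V.val_t hΓ]
    ring
  intro h
  exact ((V.res_eq_zero_iff (mul_ne_zero ht hc) hunit.ge).1 h).ne' hunit

theorem initialForm_eq_sum_minimizers (V : ValSetup K 𝕜) {m : ℕ} (w : Fin m → ℝ)
    (f : MvPolynomial (Fin m) K) :
    V.initialForm w f = ∑ u ∈ f.support.minimizers (fun u => V.val (coeff u f) + dotN w u),
      monomial u (V.res (V.t (-V.val (coeff u f)) * coeff u f)) := by
  rw [initialForm, trop, Finset.filter_eq_csInf_image]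

end ValSetup

theorem initialForm_initialForm_general {K 𝕜 : Type} [Field K] [Field 𝕜] (V : ValSetup K 𝕜)
    {n : ℕ} (f : MvPolynomial (Fin (n+1)) K) (w v : Fin (n+1) → ℝ) :
    ∃ ε : ℝ, 0 < ε ∧ ∀ ε' : ℝ, ε' ∈ V.Gamma → 0 < ε' → ε' < ε →
      initialFormTriv v (V.initialForm w f) = V.initialForm (w + ε' • v) f := by
  obtain ⟨ε, hε, hsmall⟩ := (nhdsGT_basis 0).eventually_iff.1 <|
    f.support.eventually_minimizers_add_mul (fun u => V.val (coeff u f) + dotN w u) (dotN v)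
  refine ⟨ε, hε, fun ε' _ hpos hlt => ?_⟩
  have hcoeff : ∀ u ∈ f.support.minimizers (fun u => V.val (coeff u f) + dotN w u),
      V.res (V.t (-V.val (coeff u f)) * coeff u f) ≠ 0 := fun u hu =>
    V.res_t_neg_val_mul_ne_zero (mem_support_iff.1 (Finset.mem_minimizers.1 hu).1)
  simp only [V.initialForm_eq_sum_minimizers, initialFormTriv_sum_monomial v _ _ hcoeff,
    dotN_add_smul, ← add_assoc, hsmall ⟨hpos, hlt⟩]

/-- (Lemma 3.1.)  For all `f ∈ K[x_0,…,x_n]` and `w, v ∈ Γ^{n+1}` there exists `ε > 0` such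
that `in_v(in_w(f)) = in_{w+ε'v}(f)` for all `ε' ∈ Γ` with `0 < ε' < ε`. -/
theorem initialForm_initialForm {K 𝕜 : Type} [Field K] [Field 𝕜] (V : ValSetup K 𝕜)
    {n : ℕ} (f : MvPolynomial (Fin (n+1)) K) (w v : Fin (n+1) → ℝ)
    (hw : ∀ i, w i ∈ V.Gamma) (hv : ∀ i, v i ∈ V.Gamma) :
    ∃ ε : ℝ, 0 < ε ∧ ∀ ε' : ℝ, ε' ∈ V.Gamma → 0 < ε' → ε' < ε →
      initialFormTriv v (V.initialForm w f) = V.initialForm (w + ε' • v) f :=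
  initialForm_initialForm_general V f w v
end
end

section
/- Let I ⊆ K[x_0,…,x_n] be a homogeneous ideal and w ∈ Γ^{n+1} be such that the degree-d part in_w(I)_d is spanned over k by the monomials it contains. Then the monomials of degree d not lying in in_w(I), regarded as elements of (K[x_0,…,x_n]/I)_d, form a K-basis of (K[x_0,…,x_n]/I)_d. -/
open MvPolynomial
open scoped Classical

noncomputable section

/-!
Write `f^w = f(t^{w_0} x_0, …, t^{w_n} x_n)`. When `f^w` has integral coefficients let `red f` be
its reduction modulo `𝔪`; then `in_w(f) = red (t^{-trop(f)(w)} f)`, and the reductions of the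
elements of `I` form an ideal, so every form of degree `d` in `in_w(I)` is `red f` for a form
`f ∈ I_d`. Forms whose reductions are `k`-linearly independent are `K`-linearly independent.
Lifting the monomials of `in_w(I)_d` to `I_d` and keeping the other monomials of degree `d`
therefore gives `dim_K K[x]_d` independent forms, so the standard monomials span
`(K[x]/I)_d`. A nonzero combination of standard monomials lying in `I` would have an initial
form in `in_w(I)_d` supported on standard monomials, which is impossible when `in_w(I)_d` is
spanned by the monomials it contains.
-/

lemma dotN_add {m : ℕ} (w : Fin m → ℝ) (u v : Fin m →₀ ℕ) :
    dotN w (u + v) = dotN w u + dotN w v := by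
  simp only [dotN, Finsupp.add_apply, Nat.cast_add, mul_add, Finset.sum_add_distrib]

lemma linearIndependent_monomial_one_subtype {σ R : Type*} [CommSemiring R] [Nontrivial R]
    (s : Set (σ →₀ ℕ)) : LinearIndependent R fun u : s => (monomial u.1 1 : MvPolynomial σ R) := by
  have h := (basisMonomials σ R).linearIndependent.comp _ (Subtype.val_injective (p := (· ∈ s)))
  rwa [coe_basisMonomials] at h

lemma monomial_mem_of_mem_support {R : Type*} [CommSemiring R] {m d : ℕ}
    {J : Ideal (MvPolynomial (Fin m) R)}
    (hspan : Submodule.restrictScalars R J ⊓ homogeneousSubmodule (Fin m) R d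
      = Submodule.span R {g | ∃ u : Fin m →₀ ℕ,
          (u.sum fun _ e => e) = d ∧ g = monomial u 1 ∧ g ∈ J})
    {g : MvPolynomial (Fin m) R} (hgJ : g ∈ J) (hgd : g.IsHomogeneous d)
    {u : Fin m →₀ ℕ} (hu : u ∈ g.support) : monomial u 1 ∈ J := by
  have hmonomials : {g : MvPolynomial (Fin m) R | ∃ u : Fin m →₀ ℕ,
      (u.sum fun _ e => e) = d ∧ g = monomial u 1 ∧ g ∈ J} =
      (monomial · 1) '' {u | u.degree = d ∧ monomial u 1 ∈ J} := by
    ext g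
    constructor
    · rintro ⟨u, hu, rfl, huJ⟩
      exact ⟨u, ⟨hu, huJ⟩, rfl⟩
    · rintro ⟨u, ⟨hu, huJ⟩, rfl⟩
      exact ⟨u, hu, rfl, huJ⟩
  have hg := hspan.le ⟨hgJ, hgd⟩
  rw [hmonomials, ← restrictSupport_eq_span] at hg
  exact (hg hu).2

namespace ValSetup

section ValueGroup

variable {K 𝕜 : Type} [Field K] [Field 𝕜] (V : ValSetup K 𝕜)

def valueGroup : AddSubgroup ℝ where
  carrier := V.Gamma
  zero_mem' := ⟨1, one_ne_zero, V.val_one⟩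
  add_mem' := by
    rintro _ _ ⟨a, ha, rfl⟩ ⟨b, hb, rfl⟩
    exact ⟨a * b, mul_ne_zero ha hb, V.val_mul ha hb⟩
  neg_mem' := by
    rintro _ ⟨a, ha, rfl⟩
    refine ⟨a⁻¹, inv_ne_zero ha, ?_⟩
    have h := V.val_mul ha (inv_ne_zero ha)
    rw [mul_inv_cancel₀ ha, V.val_one] at h
    linarith

lemma dotN_mem_Gamma {m : ℕ} {w : Fin m → ℝ} (hw : ∀ i, w i ∈ V.Gamma) (u : Fin m →₀ ℕ) :
    dotN w u ∈ V.Gamma :=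
  V.valueGroup.sum_mem fun i _ => by
    rw [mul_comm, ← nsmul_eq_mul]
    exact V.valueGroup.nsmul_mem (hw i) _

lemma t_zero : V.t 0 = 1 := by
  have h0 : (0 : ℝ) ∈ V.Gamma := V.valueGroup.zero_mem
  have h := V.t_add h0 h0
  rw [add_zero] at h
  exact (mul_eq_left₀ (V.t_ne_zero h0)).1 h.symm

lemma val_t_mul {r : ℝ} (hr : r ∈ V.Gamma) {c : K} (hc : c ≠ 0) :
    V.val (V.t r * c) = r + V.val c := by
  rw [V.val_mul (V.t_ne_zero hr) hc, V.val_t hr]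

lemma res_ne_zero {a : K} (ha : a ≠ 0) (h : V.val a = 0) : V.res a ≠ 0 := fun h0 => by
  have := (V.res_eq_zero_iff ha h.ge).1 h0
  linarith

lemma res_eq_zero_of_val_pos {a : K} (ha : a ≠ 0) (h : 0 < V.val a) : V.res a = 0 :=
  (V.res_eq_zero_iff ha h.le).2 h

end ValueGroup

section Reduction

variable {K 𝕜 : Type} [Field K] [Field 𝕜] (V : ValSetup K 𝕜) {m : ℕ} (w : Fin m → ℝ)

/-- `f(t^{w_0} x_0, …, t^{w_{m-1}} x_{m-1})` has its coefficients in the valuation ring. -/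
def IsWIntegral (f : MvPolynomial (Fin m) K) : Prop :=
  ∀ u, coeff u f ≠ 0 → 0 ≤ V.val (coeff u f) + dotN w u

/-- The reduction modulo `𝔪` of `f(t^{w_0} x_0, …, t^{w_{m-1}} x_{m-1})`. -/
def wReduction (f : MvPolynomial (Fin m) K) : MvPolynomial (Fin m) 𝕜 :=
  ∑ u ∈ f.support, monomial u (V.res (V.t (dotN w u) * coeff u f))

variable {V w}

lemma coeff_wReduction (f : MvPolynomial (Fin m) K) (u : Fin m →₀ ℕ) :
    coeff u (V.wReduction w f) = V.res (V.t (dotN w u) * coeff u f) := by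
  classical
  simp only [wReduction, coeff_sum, coeff_monomial, Finset.sum_ite_eq', mem_support_iff]
  split_ifs with h
  · rfl
  · rw [not_not.1 h, mul_zero, V.res_zero]

lemma wReduction_zero : V.wReduction w (0 : MvPolynomial (Fin m) K) = 0 := by
  simp [wReduction]

lemma IsWIntegral.add {f g : MvPolynomial (Fin m) K} (hf : V.IsWIntegral w f)
    (hg : V.IsWIntegral w g) : V.IsWIntegral w (f + g) := by
  intro u hu
  rw [coeff_add] at hu ⊢
  by_cases hfu : coeff u f = 0
  · rw [hfu, zero_add] at hu ⊢
    exact hg u hu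
  by_cases hgu : coeff u g = 0
  · rw [hgu, add_zero] at hu ⊢
    exact hf u hu
  have hmin : 0 ≤ min (V.val (coeff u f)) (V.val (coeff u g)) + dotN w u := by
    rw [← min_add_add_right]
    exact le_min (hf u hfu) (hg u hgu)
  linarith [V.val_add hfu hgu hu]

lemma isWIntegral_sum {ι : Type*} (s : Finset ι) (F : ι → MvPolynomial (Fin m) K)
    (hF : ∀ i ∈ s, V.IsWIntegral w (F i)) : V.IsWIntegral w (∑ i ∈ s, F i) :=
  Finset.sum_induction F _ (fun _ _ => IsWIntegral.add) (fun u hu => absurd (coeff_zero u) hu) hF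

lemma IsWIntegral.smul {b : K} (hb : b = 0 ∨ 0 ≤ V.val b) {f : MvPolynomial (Fin m) K}
    (hf : V.IsWIntegral w f) : V.IsWIntegral w (b • f) := by
  intro u hu
  rw [coeff_smul, smul_eq_mul] at hu ⊢
  have hb0 := left_ne_zero_of_mul hu
  have hu0 := right_ne_zero_of_mul hu
  rw [V.val_mul hb0 hu0]
  linarith [hb.resolve_left hb0, hf u hu0]

lemma IsWIntegral.homogeneousComponent {f : MvPolynomial (Fin m) K} (hf : V.IsWIntegral w f)
    (d : ℕ) : V.IsWIntegral w (homogeneousComponent d f) := by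
  intro u hu
  rw [coeff_homogeneousComponent] at hu ⊢
  split_ifs at hu ⊢
  · exact hf u hu
  · exact absurd rfl hu

lemma wReduction_homogeneousComponent (d : ℕ) (f : MvPolynomial (Fin m) K) :
    V.wReduction w (homogeneousComponent d f) = homogeneousComponent d (V.wReduction w f) := by
  ext u
  rw [coeff_wReduction, coeff_homogeneousComponent, coeff_homogeneousComponent, coeff_wReduction]
  split_ifs
  · rfl
  · rw [mul_zero, V.res_zero]

variable (hw : ∀ i, w i ∈ V.Gamma)
include hw

lemma IsWIntegral.integral_twist {f : MvPolynomial (Fin m) K} (hf : V.IsWIntegral w f)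
    (u : Fin m →₀ ℕ) :
    V.t (dotN w u) * coeff u f = 0 ∨ 0 ≤ V.val (V.t (dotN w u) * coeff u f) := by
  by_cases hu : coeff u f = 0
  · simp [hu]
  · right
    rw [V.val_t_mul (V.dotN_mem_Gamma hw u) hu]
    linarith [hf u hu]

lemma IsWIntegral.monomial_mul {b : K} (hb : b = 0 ∨ 0 ≤ V.val b) (v : Fin m →₀ ℕ)
    {f : MvPolynomial (Fin m) K} (hf : V.IsWIntegral w f) :
    V.IsWIntegral w (monomial v (b * V.t (-dotN w v)) * f) := by
  intro u hu
  rw [coeff_monomial_mul'] at hu ⊢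
  split_ifs at hu ⊢ with hvu
  · have hv : -dotN w v ∈ V.Gamma := V.valueGroup.neg_mem (V.dotN_mem_Gamma hw v)
    have hb0 := left_ne_zero_of_mul (left_ne_zero_of_mul hu)
    have hc0 := right_ne_zero_of_mul hu
    rw [V.val_mul (mul_ne_zero hb0 (V.t_ne_zero hv)) hc0, mul_comm b, V.val_t_mul hv hb0]
    have hsplit := dotN_add w (u - v) v
    rw [tsub_add_cancel_of_le hvu] at hsplit
    linarith [hb.resolve_left hb0, hf _ hc0]
  · exact absurd rfl hu

lemma isWIntegral_monomial_t_neg (u : Fin m →₀ ℕ) :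
    V.IsWIntegral w (monomial u (V.t (-dotN w u))) := by
  intro v hv
  rw [coeff_monomial] at hv ⊢
  split_ifs at hv ⊢ with huv
  · subst huv
    rw [V.val_t (V.valueGroup.neg_mem (V.dotN_mem_Gamma hw u)), neg_add_cancel]
  · exact absurd rfl hv

lemma wReduction_add {f g : MvPolynomial (Fin m) K} (hf : V.IsWIntegral w f)
    (hg : V.IsWIntegral w g) : V.wReduction w (f + g) = V.wReduction w f + V.wReduction w g := by
  ext u
  rw [coeff_add, coeff_wReduction, coeff_wReduction, coeff_wReduction, coeff_add, mul_add]
  exact V.res_add (hf.integral_twist hw u) (hg.integral_twist hw u)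

lemma wReduction_sum {ι : Type*} (s : Finset ι) (F : ι → MvPolynomial (Fin m) K)
    (hF : ∀ i ∈ s, V.IsWIntegral w (F i)) :
    V.wReduction w (∑ i ∈ s, F i) = ∑ i ∈ s, V.wReduction w (F i) := by
  classical
  induction s using Finset.induction_on with
  | empty => simp [wReduction_zero]
  | insert i s hi ih =>
    have hF' : ∀ j ∈ s, V.IsWIntegral w (F j) := fun j hj => hF j (Finset.mem_insert_of_mem hj)
    rw [Finset.sum_insert hi, Finset.sum_insert hi, ← ih hF',
      wReduction_add hw (hF i (Finset.mem_insert_self i s)) (isWIntegral_sum s F hF')]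

lemma wReduction_smul {b : K} (hb : b = 0 ∨ 0 ≤ V.val b) {f : MvPolynomial (Fin m) K}
    (hf : V.IsWIntegral w f) : V.wReduction w (b • f) = V.res b • V.wReduction w f := by
  ext u
  rw [coeff_smul, coeff_wReduction, coeff_wReduction, coeff_smul, smul_eq_mul, smul_eq_mul,
    mul_left_comm]
  exact V.res_mul hb (hf.integral_twist hw u)

lemma wReduction_monomial_mul {b : K} (hb : b = 0 ∨ 0 ≤ V.val b) (v : Fin m →₀ ℕ)
    {f : MvPolynomial (Fin m) K} (hf : V.IsWIntegral w f) :
    V.wReduction w (monomial v (b * V.t (-dotN w v)) * f)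
      = monomial v (V.res b) * V.wReduction w f := by
  ext u
  rw [coeff_wReduction, coeff_monomial_mul', coeff_monomial_mul']
  split_ifs with hvu
  · have hsplit := dotN_add w (u - v) v
    rw [tsub_add_cancel_of_le hvu] at hsplit
    have ht : V.t (dotN w u) * V.t (-dotN w v) = V.t (dotN w (u - v)) := by
      rw [← V.t_add (V.dotN_mem_Gamma hw u) (V.valueGroup.neg_mem (V.dotN_mem_Gamma hw v))]
      congr 1
      linarith
    have hcoeff : V.t (dotN w u) * (b * V.t (-dotN w v) * coeff (u - v) f)
        = b * (V.t (dotN w (u - v)) * coeff (u - v) f) := by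
      rw [← ht]
      ring
    rw [coeff_wReduction, hcoeff]
    exact V.res_mul hb (hf.integral_twist hw _)
  · rw [mul_zero, V.res_zero]

lemma wReduction_monomial_t_neg (u : Fin m →₀ ℕ) :
    V.wReduction w (monomial u (V.t (-dotN w u))) = monomial u 1 := by
  ext v
  rw [coeff_wReduction, coeff_monomial, coeff_monomial]
  split_ifs with huv
  · subst huv
    rw [← V.t_add (V.dotN_mem_Gamma hw u) (V.valueGroup.neg_mem (V.dotN_mem_Gamma hw u)),
      add_neg_cancel, V.t_zero, V.res_one]
  · rw [mul_zero, V.res_zero]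

end Reduction

section InitialForms

variable {K 𝕜 : Type} [Field K] [Field 𝕜] {V : ValSetup K 𝕜} {m : ℕ} {w : Fin m → ℝ}

lemma trop_le {f : MvPolynomial (Fin m) K} {u : Fin m →₀ ℕ} (hu : coeff u f ≠ 0) :
    V.trop f w ≤ V.val (coeff u f) + dotN w u :=
  csInf_le (f.support.finite_toSet.image _).bddBelow ⟨u, mem_support_iff.2 hu, rfl⟩

lemma exists_trop_eq {f : MvPolynomial (Fin m) K} (hf : f ≠ 0) :
    ∃ u, coeff u f ≠ 0 ∧ V.val (coeff u f) + dotN w u = V.trop f w := by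
  have hne : ((fun u => V.val (coeff u f) + dotN w u) '' (f.support : Set (Fin m →₀ ℕ))).Nonempty :=
    (Finset.coe_nonempty.2 (support_nonempty.2 hf)).image _
  obtain ⟨u, hu, h⟩ := hne.csInf_mem (f.support.finite_toSet.image _)
  exact ⟨u, mem_support_iff.1 hu, h⟩

lemma trop_mem_Gamma (hw : ∀ i, w i ∈ V.Gamma) {f : MvPolynomial (Fin m) K} (hf : f ≠ 0) :
    V.trop f w ∈ V.Gamma := by
  obtain ⟨u, hu, h⟩ := exists_trop_eq (V := V) (w := w) hf
  rw [← h]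
  exact V.valueGroup.add_mem ⟨_, hu, rfl⟩ (V.dotN_mem_Gamma hw u)

lemma coeff_initialForm (f : MvPolynomial (Fin m) K) (u : Fin m →₀ ℕ) :
    coeff u (V.initialForm w f) =
      if coeff u f ≠ 0 ∧ V.val (coeff u f) + dotN w u = V.trop f w
      then V.res (V.t (-V.val (coeff u f)) * coeff u f) else 0 := by
  classical
  simp only [initialForm, coeff_sum, coeff_monomial, Finset.sum_ite_eq', Finset.mem_filter,
    mem_support_iff]

lemma coeff_initialForm_eq_zero {f : MvPolynomial (Fin m) K} {u : Fin m →₀ ℕ}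
    (hu : coeff u f = 0) : coeff u (V.initialForm w f) = 0 := by
  rw [coeff_initialForm, if_neg (fun h => h.1 hu)]

lemma initialForm_ne_zero {f : MvPolynomial (Fin m) K} (hf : f ≠ 0) :
    V.initialForm w f ≠ 0 := by
  obtain ⟨u, hu, htrop⟩ := exists_trop_eq (V := V) (w := w) hf
  have hΓ : -V.val (coeff u f) ∈ V.Gamma := V.valueGroup.neg_mem ⟨_, hu, rfl⟩
  refine ne_zero_iff.2 ⟨u, ?_⟩
  rw [coeff_initialForm, if_pos ⟨hu, htrop⟩]
  exact V.res_ne_zero (mul_ne_zero (V.t_ne_zero hΓ) hu) (by rw [V.val_t_mul hΓ hu, neg_add_cancel])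

variable (hw : ∀ i, w i ∈ V.Gamma)
include hw

lemma isWIntegral_t_neg_trop_smul (f : MvPolynomial (Fin m) K) :
    V.IsWIntegral w (V.t (-V.trop f w) • f) := by
  intro u hu
  rw [coeff_smul, smul_eq_mul] at hu ⊢
  have hc := right_ne_zero_of_mul hu
  have hf : f ≠ 0 := fun h => hc (by rw [h, coeff_zero])
  rw [V.val_t_mul (V.valueGroup.neg_mem (trop_mem_Gamma hw hf)) hc]
  linarith [trop_le (V := V) (w := w) hc]

lemma wReduction_t_neg_trop_smul (f : MvPolynomial (Fin m) K) :
    V.wReduction w (V.t (-V.trop f w) • f) = V.initialForm w f := by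
  ext u
  rw [coeff_wReduction, coeff_smul, smul_eq_mul, coeff_initialForm]
  by_cases hc : coeff u f = 0
  · simp [hc, V.res_zero]
  have hf : f ≠ 0 := fun h => hc (by rw [h, coeff_zero])
  have htrop : -V.trop f w ∈ V.Gamma := V.valueGroup.neg_mem (trop_mem_Gamma hw hf)
  have hΓ : dotN w u + -V.trop f w ∈ V.Gamma := V.valueGroup.add_mem (V.dotN_mem_Gamma hw u) htrop
  rw [← mul_assoc, ← V.t_add (V.dotN_mem_Gamma hw u) htrop]
  split_ifs with h
  · rw [show dotN w u + -V.trop f w = -V.val (coeff u f) by linarith [h.2]]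
  · have hlt : V.trop f w < V.val (coeff u f) + dotN w u :=
      (trop_le hc).lt_of_ne fun h' => h ⟨hc, h'.symm⟩
    refine V.res_eq_zero_of_val_pos (mul_ne_zero (V.t_ne_zero hΓ) hc) ?_
    rw [V.val_t_mul hΓ hc]
    linarith

variable {I : Ideal (MvPolynomial (Fin m) K)}

lemma exists_wReduction_eq_mul (a : MvPolynomial (Fin m) 𝕜) {f : MvPolynomial (Fin m) K}
    (hfI : f ∈ I) (hf : V.IsWIntegral w f) :
    ∃ f' ∈ I, V.IsWIntegral w f' ∧ V.wReduction w f' = a * V.wReduction w f := by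
  induction a using MvPolynomial.induction_on' with
  | monomial v c =>
    obtain ⟨b, hb, rfl⟩ := V.res_surjective c
    exact ⟨_, I.mul_mem_left _ hfI, hf.monomial_mul hw hb v, wReduction_monomial_mul hw hb v hf⟩
  | add a₁ a₂ h₁ h₂ =>
    obtain ⟨f₁, hf₁I, hf₁, h₁⟩ := h₁
    obtain ⟨f₂, hf₂I, hf₂, h₂⟩ := h₂
    exact ⟨f₁ + f₂, I.add_mem hf₁I hf₂I, hf₁.add hf₂,
      by rw [wReduction_add hw hf₁ hf₂, h₁, h₂, add_mul]⟩

lemma exists_wReduction_eq_of_mem_initialIdeal {g : MvPolynomial (Fin m) 𝕜}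
    (hg : g ∈ V.initialIdeal w I) : ∃ f ∈ I, V.IsWIntegral w f ∧ V.wReduction w f = g := by
  induction hg using Submodule.span_induction with
  | mem g hg =>
    obtain ⟨f, hfI, rfl⟩ := hg
    exact ⟨_, I.smul_of_tower_mem _ hfI, isWIntegral_t_neg_trop_smul hw f,
      wReduction_t_neg_trop_smul hw f⟩
  | zero => exact ⟨0, I.zero_mem, fun u hu => absurd (coeff_zero u) hu, wReduction_zero⟩
  | add g₁ g₂ _ _ h₁ h₂ =>
    obtain ⟨f₁, hf₁I, hf₁, rfl⟩ := h₁
    obtain ⟨f₂, hf₂I, hf₂, rfl⟩ := h₂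
    exact ⟨f₁ + f₂, I.add_mem hf₁I hf₂I, hf₁.add hf₂, wReduction_add hw hf₁ hf₂⟩
  | smul a g _ h =>
    obtain ⟨f, hfI, hf, rfl⟩ := h
    exact exists_wReduction_eq_mul hw a hfI hf

lemma exists_homogeneous_wReduction_eq (hI : IsHomogIdeal I) {d : ℕ}
    {g : MvPolynomial (Fin m) 𝕜} (hg : g ∈ V.initialIdeal w I) (hgd : g.IsHomogeneous d) :
    ∃ f ∈ I, f.IsHomogeneous d ∧ V.IsWIntegral w f ∧ V.wReduction w f = g := by
  obtain ⟨f, hfI, hf, rfl⟩ := exists_wReduction_eq_of_mem_initialIdeal hw hg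
  exact ⟨_, hI f hfI d, homogeneousComponent_isHomogeneous d f, hf.homogeneousComponent d,
    by rw [wReduction_homogeneousComponent, homogeneousComponent_eq_self hgd]⟩

end InitialForms

section Basis

variable {K 𝕜 : Type} [Field K] [Field 𝕜] {V : ValSetup K 𝕜} {m : ℕ} {w : Fin m → ℝ}

theorem disjoint_restrictSupport_ideal {I : Ideal (MvPolynomial (Fin m) K)} {d : ℕ}
    (hmono : ∀ g ∈ V.initialIdeal w I, g.IsHomogeneous d →
      ∀ u ∈ g.support, (monomial u 1 : MvPolynomial (Fin m) 𝕜) ∈ V.initialIdeal w I) :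
    Disjoint (restrictSupport K {u | u.degree = d ∧
      (monomial u 1 : MvPolynomial (Fin m) 𝕜) ∉ V.initialIdeal w I}) (I.restrictScalars K) := by
  rw [Submodule.disjoint_def]
  intro f hfT hfI
  by_contra hf
  have hsupp : ∀ u ∈ (V.initialForm w f).support, u.degree = d ∧
      (monomial u 1 : MvPolynomial (Fin m) 𝕜) ∉ V.initialIdeal w I := fun u hu =>
    hfT (mem_support_iff.2 fun h => mem_support_iff.1 hu (coeff_initialForm_eq_zero h))
  have hhom : (V.initialForm w f).IsHomogeneous d := by
    rw [← mem_homogeneousSubmodule, homogeneousSubmodule_eq_finsupp_supported]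
    exact fun u hu => (hsupp u hu).1
  obtain ⟨u, hu⟩ := ne_zero_iff.1 (initialForm_ne_zero (V := V) (w := w) hf)
  exact (hsupp u (mem_support_iff.2 hu)).2
    (hmono _ (Ideal.subset_span ⟨f, hfI, rfl⟩) hhom u (mem_support_iff.2 hu))

variable (hw : ∀ i, w i ∈ V.Gamma)
include hw

theorem linearIndependent_of_linearIndependent_wReduction {ι : Type*}
    {F : ι → MvPolynomial (Fin m) K} (hF : ∀ i, V.IsWIntegral w (F i))
    (hred : LinearIndependent 𝕜 fun i => V.wReduction w (F i)) : LinearIndependent K F := by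
  classical
  rw [linearIndependent_iff'] at hred ⊢
  intro s g hg i hi
  by_contra hgi
  obtain ⟨j, hj, hmin⟩ := (s.filter (g · ≠ 0)).exists_min_image (fun k => V.val (g k))
    ⟨i, Finset.mem_filter.2 ⟨hi, hgi⟩⟩
  obtain ⟨hjs, hgj⟩ := Finset.mem_filter.1 hj
  -- rescaling by `t^{-val(g j)}` makes every coefficient integral and the `j`-th one a unit
  have hΓ : -V.val (g j) ∈ V.Gamma := V.valueGroup.neg_mem ⟨g j, hgj, rfl⟩
  set a := V.t (-V.val (g j))
  have hint : ∀ k ∈ s, a * g k = 0 ∨ 0 ≤ V.val (a * g k) := by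
    intro k hk
    by_cases hgk : g k = 0
    · simp [hgk]
    · right
      rw [V.val_t_mul hΓ hgk]
      linarith [hmin k (Finset.mem_filter.2 ⟨hk, hgk⟩)]
  have hrel : ∑ k ∈ s, V.res (a * g k) • V.wReduction w (F k) = 0 :=
    calc ∑ k ∈ s, V.res (a * g k) • V.wReduction w (F k)
        = V.wReduction w (∑ k ∈ s, (a * g k) • F k) := by
          rw [wReduction_sum hw _ _ fun k hk => (hF k).smul (hint k hk)]
          exact Finset.sum_congr rfl fun k hk => (wReduction_smul hw (hint k hk) (hF k)).symm
      _ = V.wReduction w (a • ∑ k ∈ s, g k • F k) := by simp only [Finset.smul_sum, smul_smul]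
      _ = 0 := by rw [hg, smul_zero, wReduction_zero]
  exact V.res_ne_zero (mul_ne_zero (V.t_ne_zero hΓ) hgj) (by rw [V.val_t_mul hΓ hgj, neg_add_cancel])
    (hred s _ hrel j hjs)

theorem homogeneousSubmodule_le_restrictSupport_sup {I : Ideal (MvPolynomial (Fin m) K)}
    (hI : IsHomogIdeal I) (d : ℕ) :
    homogeneousSubmodule (Fin m) K d ≤
      restrictSupport K {u | u.degree = d ∧
        (monomial u 1 : MvPolynomial (Fin m) 𝕜) ∉ V.initialIdeal w I} ⊔ I.restrictScalars K := by
  set T : Set (Fin m →₀ ℕ) :=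
    {u | u.degree = d ∧ (monomial u 1 : MvPolynomial (Fin m) 𝕜) ∉ V.initialIdeal w I}
  set D : Set (Fin m →₀ ℕ) := {u | u.degree = d}
  have : Fintype D := (Finsupp.finite_of_degree_eq d).fintype
  have hlift : ∀ u : D, ∃ G : MvPolynomial (Fin m) K, G.IsHomogeneous d ∧ V.IsWIntegral w G ∧
      V.wReduction w G = monomial u.1 1 ∧ G ∈ restrictSupport K T ⊔ I.restrictScalars K := by
    rintro ⟨u, hu⟩
    by_cases huI : (monomial u 1 : MvPolynomial (Fin m) 𝕜) ∈ V.initialIdeal w I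
    · obtain ⟨G, hGI, hGd, hG, hGred⟩ :=
        exists_homogeneous_wReduction_eq hw hI huI (isHomogeneous_monomial 1 hu)
      exact ⟨G, hGd, hG, hGred, Submodule.mem_sup_right hGI⟩
    · exact ⟨_, isHomogeneous_monomial _ hu, isWIntegral_monomial_t_neg hw u,
        wReduction_monomial_t_neg hw u,
        Submodule.mem_sup_left ((monomial_mem_restrictSupport K).2 (Or.inl ⟨hu, huI⟩))⟩
  choose G hGd hG hGred hGmem using hlift
  have hGind : LinearIndependent K G := by
    refine linearIndependent_of_linearIndependent_wReduction hw hG ?_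
    simp only [hGred]
    exact linearIndependent_monomial_one_subtype D
  have hH : homogeneousSubmodule (Fin m) K d = restrictSupport K D :=
    homogeneousSubmodule_eq_finsupp_supported _ _ d
  have hGspan : Submodule.span K (Set.range G) = homogeneousSubmodule (Fin m) K d := by
    have : FiniteDimensional K (homogeneousSubmodule (Fin m) K d) := by
      rw [hH]
      exact (basisRestrictSupport K D).finiteDimensional_of_finite
    refine Submodule.eq_of_le_of_finrank_eq (Submodule.span_le.2 ?_) ?_
    · rintro _ ⟨u, rfl⟩
      exact hGd u
    · rw [finrank_span_eq_card hGind, hH, Module.finrank_eq_card_basis (basisRestrictSupport K D)]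
  rw [← hGspan, Submodule.span_le]
  rintro _ ⟨u, rfl⟩
  exact hGmem u

end Basis

end ValSetup

theorem monomials_basis_of_quotient_general {K 𝕜 : Type} [Field K] [Field 𝕜] (V : ValSetup K 𝕜)
    {n : ℕ}
    (I : Ideal (MvPolynomial (Fin (n+1)) K)) (hI : IsHomogIdeal I)
    (w : Fin (n+1) → ℝ) (hw : ∀ i, w i ∈ V.Gamma) (d : ℕ)
    (hspan :
      Submodule.restrictScalars 𝕜 (V.initialIdeal w I)
          ⊓ homogeneousSubmodule (Fin (n+1)) 𝕜 d
        = Submodule.span 𝕜 {g : MvPolynomial (Fin (n+1)) 𝕜 | ∃ u : Fin (n+1) →₀ ℕ,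
            (u.sum fun _ e => e) = d ∧ g = monomial u 1 ∧ g ∈ V.initialIdeal w I}) :
    LinearIndependent K
      (fun u : {u : Fin (n+1) →₀ ℕ // (u.sum fun _ e => e) = d ∧
          (monomial u 1 : MvPolynomial (Fin (n+1)) 𝕜) ∉ V.initialIdeal w I} =>
        Ideal.Quotient.mk I (monomial u.1 (1 : K)))
    ∧ Submodule.span K
        (Set.range (fun u : {u : Fin (n+1) →₀ ℕ // (u.sum fun _ e => e) = d ∧
            (monomial u 1 : MvPolynomial (Fin (n+1)) 𝕜) ∉ V.initialIdeal w I} =>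
          Ideal.Quotient.mk I (monomial u.1 (1 : K))))
      = Submodule.map (Ideal.Quotient.mkₐ K I).toLinearMap
          (homogeneousSubmodule (Fin (n+1)) K d) := by
  set T : Set (Fin (n+1) →₀ ℕ) :=
    {u | u.degree = d ∧ (monomial u 1 : MvPolynomial (Fin (n+1)) 𝕜) ∉ V.initialIdeal w I}
  set Q := (Ideal.Quotient.mkₐ K I).toLinearMap
  have hkerQ : LinearMap.ker Q = I.restrictScalars K := by
    ext f
    exact Ideal.Quotient.eq_zero_iff_mem
  have hspanT : Submodule.span K (Set.range fun u : T => (monomial u.1 1 : MvPolynomial _ K))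
      = restrictSupport K T := by
    rw [restrictSupport_eq_span, Set.image_eq_range]
  refine ⟨(linearIndependent_monomial_one_subtype T).map (f := Q) ?_, ?_⟩
  · rw [hkerQ]
    convert ValSetup.disjoint_restrictSupport_ideal fun g hgJ hgd u hu =>
      monomial_mem_of_mem_support hspan hgJ hgd hu
    exact hspanT
  change Submodule.span K (Set.range (Q ∘ fun u : T => monomial u.1 1)) = _
  rw [Set.range_comp, ← Submodule.map_span, hspanT]
  refine le_antisymm (Submodule.map_mono ?_) ?_
  · rw [homogeneousSubmodule_eq_finsupp_supported]
    exact restrictSupport_mono K fun u hu => hu.1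
  calc Submodule.map Q (homogeneousSubmodule (Fin (n+1)) K d)
      ≤ Submodule.map Q (restrictSupport K T ⊔ I.restrictScalars K) :=
        Submodule.map_mono (ValSetup.homogeneousSubmodule_le_restrictSupport_sup hw hI d)
    _ = Submodule.map Q (restrictSupport K T) := by
        rw [Submodule.map_sup, sup_eq_left, ← hkerQ, Submodule.map_le_iff_le_comap]
        exact LinearMap.ker_le_comap Q

/-- (First part of Lemma 3.3.)  Let `I ⊆ K[x_0,…,x_n]` be a homogeneous ideal and let
`w ∈ Γ^{n+1}` be such that `in_w(I)_d` is the span of the monomials it contains.  Then the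
monomials of degree `d` not lying in `in_w(I)`, regarded as elements of
`(K[x_0,…,x_n]/I)_d`, form a `K`-basis of `(K[x_0,…,x_n]/I)_d`. -/
theorem monomials_basis_of_quotient {K 𝕜 : Type} [Field K] [Field 𝕜] (V : ValSetup K 𝕜)
    (hdense : Dense V.Gamma) (hQ : ∀ q : ℚ, (q : ℝ) ∈ V.Gamma) {n : ℕ}
    (I : Ideal (MvPolynomial (Fin (n+1)) K)) (hI : IsHomogIdeal I)
    (w : Fin (n+1) → ℝ) (hw : ∀ i, w i ∈ V.Gamma) (d : ℕ)
    (hspan :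
      Submodule.restrictScalars 𝕜 (V.initialIdeal w I)
          ⊓ homogeneousSubmodule (Fin (n+1)) 𝕜 d
        = Submodule.span 𝕜 {g : MvPolynomial (Fin (n+1)) 𝕜 | ∃ u : Fin (n+1) →₀ ℕ,
            (u.sum fun _ e => e) = d ∧ g = monomial u 1 ∧ g ∈ V.initialIdeal w I}) :
    LinearIndependent K
      (fun u : {u : Fin (n+1) →₀ ℕ // (u.sum fun _ e => e) = d ∧
          (monomial u 1 : MvPolynomial (Fin (n+1)) 𝕜) ∉ V.initialIdeal w I} =>
        Ideal.Quotient.mk I (monomial u.1 (1 : K)))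
    ∧ Submodule.span K
        (Set.range (fun u : {u : Fin (n+1) →₀ ℕ // (u.sum fun _ e => e) = d ∧
            (monomial u 1 : MvPolynomial (Fin (n+1)) 𝕜) ∉ V.initialIdeal w I} =>
          Ideal.Quotient.mk I (monomial u.1 (1 : K))))
      = Submodule.map (Ideal.Quotient.mkₐ K I).toLinearMap
          (homogeneousSubmodule (Fin (n+1)) K d) :=
  monomials_basis_of_quotient_general V I hI w hw d hspan
end
end

section
/- Let I ⊆ K[x_1^{±1},…,x_n^{±1}] be an ideal, let I^h ⊆ K[x_0,…,x_n] be the homogenization of I ∩ K[x_1,…,x_n], and let w ∈ Γ^n. Then setting x_0 = 1 in the initial ideal in_{(0,w)}(I^h) yields the initial ideal in_w(I), as ideals of k[x_1^{±1},…,x_n^{±1}]. -/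
open MvPolynomial
open scoped Classical

noncomputable section

/-- The Laurent polynomial ring `K[x_1^{±1},…,x_n^{±1}]`, i.e. the monoid algebra of `ℤ^n`. -/
abbrev LaurentPoly (K : Type) [CommRing K] (n : ℕ) : Type := AddMonoidAlgebra K (Fin n → ℤ)

namespace ValSetup

variable {K 𝕜 : Type} [Field K] [Field 𝕜]

/-- `trop(f)(w)` for a Laurent polynomial `f`. -/
def tropL (V : ValSetup K 𝕜) {n : ℕ} (f : LaurentPoly K n) (w : Fin n → ℝ) : ℝ :=
  sInf ((fun u => V.val (f.coeff u) + dotZ w u) '' (f.coeff.support : Set (Fin n → ℤ)))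

/-- The initial form `in_w(f) ∈ 𝕜[x_1^{±1},…,x_n^{±1}]` of a Laurent polynomial. -/
def initialFormL (V : ValSetup K 𝕜) {n : ℕ} (w : Fin n → ℝ) (f : LaurentPoly K n) :
    LaurentPoly 𝕜 n :=
  ∑ u ∈ f.coeff.support.filter (fun u => V.val (f.coeff u) + dotZ w u = V.tropL f w),
    AddMonoidAlgebra.single u (V.res (V.t (-(V.val (f.coeff u))) * f.coeff u))

/-- The initial ideal `in_w(I) ⊆ 𝕜[x_1^{±1},…,x_n^{±1}]` of an ideal of Laurent polynomials. -/
def initialIdealL (V : ValSetup K 𝕜) {n : ℕ} (w : Fin n → ℝ) (I : Ideal (LaurentPoly K n)) :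
    Ideal (LaurentPoly 𝕜 n) :=
  Ideal.span {g | ∃ f ∈ I, g = V.initialFormL w f}

/-- The tropical hypersurface `trop(V(f))` of a Laurent polynomial `f = Σ_u c_u x^u`:
the set of `w ∈ ℝ^n` at which the minimum `min{val(c_u) + w·u : c_u ≠ 0}` is achieved
at least twice. -/
def tropHyp (V : ValSetup K 𝕜) {n : ℕ} (f : LaurentPoly K n) : Set (Fin n → ℝ) :=
  {w | ∃ u₁ ∈ f.coeff.support, ∃ u₂ ∈ f.coeff.support, u₁ ≠ u₂ ∧
    V.val (f.coeff u₁) + dotZ w u₁ = V.val (f.coeff u₂) + dotZ w u₂ ∧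
    ∀ u ∈ f.coeff.support, V.val (f.coeff u₁) + dotZ w u₁ ≤ V.val (f.coeff u) + dotZ w u}

/-- `trop(V(I)) = ⋂_{0 ≠ f ∈ I} trop(V(f))` for an ideal of Laurent polynomials. -/
def tropV (V : ValSetup K 𝕜) {n : ℕ} (I : Ideal (LaurentPoly K n)) : Set (Fin n → ℝ) :=
  ⋂ f ∈ {f : LaurentPoly K n | f ∈ I ∧ f ≠ 0}, V.tropHyp f

end ValSetup

/-- The character of `ℤ^n` given by a point `x` of the torus `(K^*)^n`:
`u ↦ x^u = Π_i x_i^{u_i}`. -/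
def torusChar {K : Type} [Field K] {n : ℕ} (x : Fin n → Kˣ) :
    Multiplicative (Fin n → ℤ) →* K where
  toFun u := ∏ i, ((x i : K) ^ ((Multiplicative.toAdd u) i : ℤ))
  map_one' := by simp
  map_mul' u v := by
    simp only [← Finset.prod_mul_distrib, toAdd_mul, Pi.add_apply]
    refine Finset.prod_congr rfl fun i _ => ?_
    exact zpow_add₀ (x i).ne_zero _ _

/-- Evaluation of Laurent polynomials at a point of the torus `(K^*)^n`, as a `K`-algebra
homomorphism. -/
def torusEval {K : Type} [Field K] {n : ℕ} (x : Fin n → Kˣ) :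
    LaurentPoly K n →ₐ[K] K :=
  AddMonoidAlgebra.lift K K (Fin n → ℤ) (torusChar x)

/-- The subvariety of the torus `(K^*)^n` cut out by an ideal of Laurent polynomials. -/
def torusZeros {K : Type} [Field K] {n : ℕ} (J : Ideal (LaurentPoly K n)) :
    Set (Fin n → Kˣ) :=
  {x | ∀ f ∈ J, torusEval x f = 0}

/-- The ideal `I(X)` of all Laurent polynomials vanishing on a subset `X` of the torus. -/
def vanishingIdeal {K : Type} [Field K] {n : ℕ} (X : Set (Fin n → Kˣ)) :
    Ideal (LaurentPoly K n) where
  carrier := {f | ∀ x ∈ X, torusEval x f = 0}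
  add_mem' ha hb x hx := by simp [map_add, ha x hx, hb x hx]
  zero_mem' x hx := by simp
  smul_mem' c f hf x hx := by simp [smul_eq_mul, map_mul, hf x hx]

/-- The inclusion `K[x_1,…,x_n] → K[x_1^{±1},…,x_n^{±1}]`. -/
def polyToLaurent (K : Type) [Field K] (n : ℕ) :
    MvPolynomial (Fin n) K →ₐ[K] LaurentPoly K n :=
  MvPolynomial.aeval
    (fun i => (AddMonoidAlgebra.single (Pi.single i (1 : ℤ)) (1 : K) : LaurentPoly K n))

/-- The homogenization `x_0^{deg f} f(x_1/x_0,…,x_n/x_0)` of a polynomial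
`f ∈ K[x_1,…,x_n]`, an element of `K[x_0,x_1,…,x_n]` (the new variable is indexed by
`0 : Fin (n+1)`). -/
def homogenize {K : Type} [Field K] {n : ℕ} (f : MvPolynomial (Fin n) K) :
    MvPolynomial (Fin (n+1)) K :=
  ∑ u ∈ f.support,
    monomial (Finsupp.equivFunOnFinite.symm
        (Fin.cons (f.totalDegree - (u.sum fun _ e => e)) (u : Fin n → ℕ)))
      (coeff u f)

/-- The homogenization `I^h ⊆ K[x_0,…,x_n]` of `I ∩ K[x_1,…,x_n]`, for an ideal `I` of the
Laurent polynomial ring. -/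
def homogIdeal {K : Type} [Field K] {n : ℕ} (I : Ideal (LaurentPoly K n)) :
    Ideal (MvPolynomial (Fin (n+1)) K) :=
  Ideal.span {g | ∃ f : MvPolynomial (Fin n) K, polyToLaurent K n f ∈ I ∧ g = homogenize f}

/-- The map `𝕜[x_0,…,x_n] → 𝕜[x_1^{±1},…,x_n^{±1}]` setting `x_0 = 1`. -/
def dehomogenize (𝕜 : Type) [Field 𝕜] (n : ℕ) :
    MvPolynomial (Fin (n+1)) 𝕜 →ₐ[𝕜] LaurentPoly 𝕜 n :=
  MvPolynomial.aeval
    (Fin.cons 1 (fun i => (AddMonoidAlgebra.single (Pi.single i (1 : ℤ)) (1 : 𝕜) : LaurentPoly 𝕜 n)))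

/-! Setting `x_0 = 1` acts on exponents by `u ↦ (u_1,…,u_n)`, which is injective on the monomials
of a fixed degree and turns the weight `(0,w)·u` into `w·(u_1,…,u_n)`; hence it commutes with taking
initial forms of homogeneous polynomials. For `F ∈ I^h`, the initial form `in_{(0,w)}(F)` is the sum
of the initial forms of those homogeneous components of `F` (again in `I^h`) on which the minimum is
attained, which gives `⊆`. Conversely, a monomial multiple `x^a f` of any `f ∈ I` is a polynomial
`g`, and `x^a in_w(f) = in_w(x^a f)` is the dehomogenized initial form of the homogenization of `g`;
as `x^a` is a unit, this gives `⊇`. -/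

theorem AddMonoidAlgebra.single_one_mul_eq_mapDomain {R G : Type*} [Semiring R] [AddGroup G]
    (a : G) (f : AddMonoidAlgebra R G) :
    AddMonoidAlgebra.single a 1 * f = AddMonoidAlgebra.mapDomain (a + ·) f := by
  ext u
  rw [AddMonoidAlgebra.coeff_single_mul_apply, one_mul, AddMonoidAlgebra.coeff_mapDomain,
    ← Finsupp.mapDomain_apply (add_right_injective a) f.coeff (-a + u), add_neg_cancel_left]

theorem AddMonoidAlgebra.isUnit_single_one {R G : Type*} [CommSemiring R] [AddGroup G] (a : G) :
    IsUnit (AddMonoidAlgebra.single a (1 : R)) :=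
  (Group.isUnit (Multiplicative.ofAdd a)).map (AddMonoidAlgebra.of R G)

theorem MvPolynomial.homogeneousComponent_eq_ofCoeff_filter {σ R : Type*} [CommSemiring R]
    (d : ℕ) (P : MvPolynomial σ R) :
    homogeneousComponent d P
      = AddMonoidAlgebra.ofCoeff
          (Finsupp.filter (fun u : σ →₀ ℕ => u.degree = d) (AddMonoidAlgebra.coeff P)) := by
  ext u
  rw [coeff_homogeneousComponent]
  exact (Finsupp.filter_apply (fun u : σ →₀ ℕ => u.degree = d) _ u).symm

namespace ValSetup

variable {K 𝕜 : Type} [Field K] [Field 𝕜] (V : ValSetup K 𝕜) {M N : Type*}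

/- `trop`, `initialForm` and `initialFormL` are, definitionally, `minWeight` and `initialTerms`
for the weights `dotN w` and `dotZ w`. -/
def minWeight (ω : M → ℝ) (f : AddMonoidAlgebra K M) : ℝ :=
  sInf ((fun u => V.val (f.coeff u) + ω u) '' (f.coeff.support : Set M))

def initialTerms (ω : M → ℝ) (f : AddMonoidAlgebra K M) : AddMonoidAlgebra 𝕜 M :=
  ∑ u ∈ f.coeff.support.filter (fun u => V.val (f.coeff u) + ω u = V.minWeight ω f),
    AddMonoidAlgebra.single u (V.res (V.t (-(V.val (f.coeff u))) * f.coeff u))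

variable {V} {ω : M → ℝ} {f g : AddMonoidAlgebra K M}

theorem minWeight_le {u : M} (hu : u ∈ f.coeff.support) :
    V.minWeight ω f ≤ V.val (f.coeff u) + ω u :=
  csInf_le (f.coeff.support.finite_toSet.image _).bddBelow ⟨u, hu, rfl⟩

theorem le_minWeight {r : ℝ} (hf : f ≠ 0)
    (h : ∀ u ∈ f.coeff.support, r ≤ V.val (f.coeff u) + ω u) : r ≤ V.minWeight ω f := by
  have hne : f.coeff.support.Nonempty :=
    Finsupp.support_nonempty_iff.mpr (mt AddMonoidAlgebra.coeff_eq_zero.mp hf)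
  exact le_csInf (hne.to_set.image _) (by rintro _ ⟨u, hu, rfl⟩; exact h u hu)

theorem minWeight_le_minWeight_of_coeff_eq (hg : g ≠ 0)
    (hgf : ∀ u ∈ g.coeff.support, g.coeff u = f.coeff u) :
    V.minWeight ω f ≤ V.minWeight ω g :=
  le_minWeight hg fun u hu => hgf u hu ▸ minWeight_le (by
    rw [Finsupp.mem_support_iff, ← hgf u hu]; exact Finsupp.mem_support_iff.mp hu)

theorem coeff_initialTerms (u : M) :
    (V.initialTerms ω f).coeff u = if V.val (f.coeff u) + ω u = V.minWeight ω f
      then V.res (V.t (-V.val (f.coeff u)) * f.coeff u) else 0 := by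
  rw [initialTerms, AddMonoidAlgebra.coeff_sum, Finset.sum_apply']
  simp only [AddMonoidAlgebra.coeff_single, Finsupp.single_apply]
  rw [Finset.sum_ite_eq']
  by_cases hu : u ∈ f.coeff.support
  · simp [hu]
  · simp [hu, Finsupp.notMem_support_iff.mp hu, V.res_zero]

theorem coeff_initialTerms_eq_zero {u : M} (hu : f.coeff u = 0) :
    (V.initialTerms ω f).coeff u = 0 := by
  simp [coeff_initialTerms, hu, V.res_zero]

theorem support_initialTerms_subset : (V.initialTerms ω f).coeff.support ⊆ f.coeff.support :=
  fun _ hu => Finsupp.mem_support_iff.mpr fun h0 =>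
    Finsupp.mem_support_iff.mp hu (coeff_initialTerms_eq_zero h0)

theorem initialTerms_filter (p : M → Prop) [DecidablePred p] (f : AddMonoidAlgebra K M) :
    AddMonoidAlgebra.ofCoeff ((V.initialTerms ω f).coeff.filter p) = 0 ∨
      AddMonoidAlgebra.ofCoeff ((V.initialTerms ω f).coeff.filter p)
        = V.initialTerms ω (AddMonoidAlgebra.ofCoeff (f.coeff.filter p)) := by
  set fp := AddMonoidAlgebra.ofCoeff (f.coeff.filter p)
  have hfp : ∀ u, fp.coeff u = if p u then f.coeff u else 0 := fun u => Finsupp.filter_apply ..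
  by_cases hmin : V.minWeight ω fp = V.minWeight ω f
  · right
    ext u
    rw [AddMonoidAlgebra.coeff_ofCoeff, Finsupp.filter_apply, coeff_initialTerms,
      coeff_initialTerms, hfp, hmin]
    split_ifs <;> simp_all [V.res_zero]
  · left
    ext u
    rw [AddMonoidAlgebra.coeff_ofCoeff, Finsupp.filter_apply, AddMonoidAlgebra.coeff_zero,
      Finsupp.coe_zero, Pi.zero_apply, ite_eq_right_iff]
    intro hu
    by_contra hne
    -- `u` would be an exponent of `fp` of weight `minWeight ω f`, forcing `hmin` to fail
    have hfu : f.coeff u ≠ 0 := fun h0 => hne (coeff_initialTerms_eq_zero h0)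
    have hweight : V.val (f.coeff u) + ω u = V.minWeight ω f := by
      by_contra h
      exact hne (by rw [coeff_initialTerms, if_neg h])
    have hfpu : fp.coeff u = f.coeff u := by rw [hfp, if_pos hu]
    have hfp0 : fp ≠ 0 := fun h => hfu (by rw [← hfpu, h]; rfl)
    refine hmin (le_antisymm ?_ (minWeight_le_minWeight_of_coeff_eq hfp0 fun v _ => ?_))
    · rw [← hweight, ← hfpu]
      exact minWeight_le (Finsupp.mem_support_iff.mpr (hfpu ▸ hfu))
    · rw [hfp]
      split_ifs <;> simp_all

section MapDomain

variable {φ : M → N} {ω' : N → ℝ} {c : ℝ}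

theorem minWeight_mapDomain (hf : f ≠ 0) (hφ : Set.InjOn φ f.coeff.support)
    (hω : ∀ u ∈ f.coeff.support, ω' (φ u) = ω u + c) :
    V.minWeight ω' (AddMonoidAlgebra.mapDomain φ f) = V.minWeight ω f + c := by
  have hcoeff : ∀ u ∈ f.coeff.support,
      (AddMonoidAlgebra.mapDomain φ f).coeff (φ u) = f.coeff u :=
    fun u hu => Finsupp.mapDomain_apply' _ _ subset_rfl hφ hu
  have hsupp : (AddMonoidAlgebra.mapDomain φ f).coeff.support = f.coeff.support.image φ :=
    Finsupp.mapDomain_support_of_injOn _ hφ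
  have hg : AddMonoidAlgebra.mapDomain φ f ≠ 0 := by
    rw [Ne, ← AddMonoidAlgebra.coeff_eq_zero, ← Finsupp.support_eq_empty, hsupp,
      Finset.image_eq_empty, Finsupp.support_eq_empty, AddMonoidAlgebra.coeff_eq_zero]
    exact hf
  apply le_antisymm
  · rw [← sub_le_iff_le_add]
    refine le_minWeight hf fun u hu => ?_
    have := minWeight_le (V := V) (ω := ω') (hsupp ▸ Finset.mem_image_of_mem φ hu)
    rw [hcoeff u hu, hω u hu] at this
    linarith
  · refine le_minWeight hg fun v hv => ?_
    obtain ⟨u, hu, rfl⟩ := Finset.mem_image.mp (hsupp ▸ hv)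
    rw [hcoeff u hu, hω u hu, ← add_assoc]
    exact add_le_add_left (minWeight_le hu) c

theorem initialTerms_mapDomain (hφ : Set.InjOn φ f.coeff.support)
    (hω : ∀ u ∈ f.coeff.support, ω' (φ u) = ω u + c) :
    V.initialTerms ω' (AddMonoidAlgebra.mapDomain φ f)
      = AddMonoidAlgebra.mapDomain φ (V.initialTerms ω f) := by
  ext v
  by_cases hv : v ∈ f.coeff.support.image φ
  · obtain ⟨u, hu, rfl⟩ := Finset.mem_image.mp hv
    have hf : f ≠ 0 := fun h => by simp [h] at hu
    rw [AddMonoidAlgebra.coeff_mapDomain,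
      Finsupp.mapDomain_apply' _ _ support_initialTerms_subset hφ hu, coeff_initialTerms,
      coeff_initialTerms, AddMonoidAlgebra.coeff_mapDomain,
      Finsupp.mapDomain_apply' _ _ subset_rfl hφ hu, hω u hu, minWeight_mapDomain hf hφ hω,
      ← add_assoc]
    simp only [add_left_inj]
  · have hvanish : ∀ {R : Type} [Semiring R] (x : AddMonoidAlgebra R M),
        x.coeff.support ⊆ f.coeff.support → (AddMonoidAlgebra.mapDomain φ x).coeff v = 0 :=
      fun x hx => Finsupp.notMem_support_iff.mp fun h =>
        hv (Finset.image_subset_image hx (Finsupp.mapDomain_support h))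
    rw [coeff_initialTerms_eq_zero (hvanish f subset_rfl), hvanish _ support_initialTerms_subset]

end MapDomain

end ValSetup

section Exponents

variable {n : ℕ}

def castExponent (n : ℕ) : (Fin n →₀ ℕ) →+ (Fin n → ℤ) where
  toFun u i := u i
  map_zero' := by ext; simp
  map_add' u v := by ext; simp

def tailExponent (n : ℕ) : (Fin (n + 1) →₀ ℕ) →+ (Fin n → ℤ) where
  toFun u i := u i.succ
  map_zero' := by ext; simp
  map_add' u v := by ext; simp

theorem tailExponent_injOn (d : ℕ) :
    Set.InjOn (tailExponent n) {u | u.degree = d} := by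
  intro u hu v hv huv
  have htail : ∀ i : Fin n, u i.succ = v i.succ := fun i => by
    simpa [tailExponent] using congrFun huv i
  have hhead : u 0 = v 0 := by
    simp only [Set.mem_ofPred_eq, Finsupp.degree_eq_sum, Fin.sum_univ_succ, htail] at hu hv
    omega
  ext i
  induction i using Fin.cases with
  | zero => exact hhead
  | succ i => exact htail i

theorem dotN_cons_zero (w : Fin n → ℝ) (u : Fin (n + 1) →₀ ℕ) :
    dotN (Fin.cons 0 w) u = dotZ w (tailExponent n u) := by
  simp [dotN, dotZ, Fin.sum_univ_succ, tailExponent]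

theorem dotZ_add (w : Fin n → ℝ) (a u : Fin n → ℤ) :
    dotZ w (a + u) = dotZ w a + dotZ w u := by
  simp [dotZ, mul_add, Finset.sum_add_distrib]

end Exponents

section Homogenization

open MvPolynomial

variable {K : Type} [Field K] {n : ℕ}

theorem polyToLaurent_eq_mapDomain (f : MvPolynomial (Fin n) K) :
    polyToLaurent K n f = AddMonoidAlgebra.mapDomain (castExponent n) f := by
  suffices h : polyToLaurent K n = AddMonoidAlgebra.mapDomainAlgHom K K (castExponent n) by
    rw [h]; rfl
  refine MvPolynomial.algHom_ext fun i => ?_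
  rw [polyToLaurent, aeval_X, X, monomial, AddMonoidAlgebra.lsingle_apply,
    AddMonoidAlgebra.mapDomainAlgHom_apply, AddMonoidAlgebra.mapDomain_single]
  congr 1
  funext j
  by_cases h : j = i <;> simp [castExponent, h]

theorem dehomogenize_eq_mapDomain (F : MvPolynomial (Fin (n + 1)) K) :
    dehomogenize K n F = AddMonoidAlgebra.mapDomain (tailExponent n) F := by
  suffices h : dehomogenize K n = AddMonoidAlgebra.mapDomainAlgHom K K (tailExponent n) by
    rw [h]; rfl
  refine MvPolynomial.algHom_ext fun i => ?_
  rw [dehomogenize, aeval_X, X, monomial, AddMonoidAlgebra.lsingle_apply,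
    AddMonoidAlgebra.mapDomainAlgHom_apply, AddMonoidAlgebra.mapDomain_single]
  induction i using Fin.cases with
  | zero => simp [tailExponent, AddMonoidAlgebra.one_def]; rfl
  | succ i =>
    rw [Fin.cons_succ]
    congr 1
    funext j
    by_cases h : j = i <;> simp [tailExponent, h]

theorem exists_polyToLaurent_eq_single_mul (f : LaurentPoly K n) :
    ∃ (a : Fin n → ℤ) (g : MvPolynomial (Fin n) K),
      polyToLaurent K n g = AddMonoidAlgebra.single a 1 * f := by
  set a : Fin n → ℤ := fun i => ∑ u ∈ f.coeff.support, |u i|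
  have ha : ∀ u ∈ f.coeff.support, ∀ i, 0 ≤ a i + u i := fun u hu i => by
    have := Finset.single_le_sum (f := fun u : Fin n → ℤ => |u i|) (fun _ _ => abs_nonneg _) hu
    linarith [neg_abs_le (u i)]
  let ψ : (Fin n → ℤ) → (Fin n →₀ ℕ) :=
    fun u => Finsupp.equivFunOnFinite.symm fun i => (a i + u i).toNat
  refine ⟨a, AddMonoidAlgebra.mapDomain ψ f, ?_⟩
  rw [polyToLaurent_eq_mapDomain, AddMonoidAlgebra.single_one_mul_eq_mapDomain]
  ext1
  simp only [AddMonoidAlgebra.coeff_mapDomain, ← Finsupp.mapDomain_comp]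
  refine Finsupp.mapDomain_congr fun u hu => ?_
  funext i
  simp [ψ, castExponent, Int.toNat_of_nonneg (ha u hu i)]

theorem dehomogenize_homogenize (g : MvPolynomial (Fin n) K) :
    dehomogenize K n (homogenize g) = polyToLaurent K n g := by
  conv_rhs => rw [g.as_sum]
  simp only [homogenize, map_sum, dehomogenize_eq_mapDomain, polyToLaurent_eq_mapDomain]
  refine Finset.sum_congr rfl fun u _ => ?_
  simp only [monomial, AddMonoidAlgebra.lsingle_apply, AddMonoidAlgebra.mapDomain_single]
  congr 1

theorem homogenize_isHomogeneous (g : MvPolynomial (Fin n) K) :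
    (homogenize g).IsHomogeneous g.totalDegree := by
  refine IsHomogeneous.sum _ _ _ fun u hu => isHomogeneous_monomial _ ?_
  have hle : (u.sum fun _ e => e) ≤ g.totalDegree := le_totalDegree hu
  rw [Finsupp.sum_fintype _ _ fun _ => rfl] at hle ⊢
  simp only [Finsupp.degree_eq_sum, Fin.sum_univ_succ, Finsupp.coe_equivFunOnFinite_symm,
    Fin.cons_zero, Fin.cons_succ]
  omega

attribute [local instance] MvPolynomial.gradedAlgebra in
theorem homogeneousComponent_mem_homogIdeal {I : Ideal (LaurentPoly K n)}
    {F : MvPolynomial (Fin (n + 1)) K} (hF : F ∈ homogIdeal I) (d : ℕ) :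
    homogeneousComponent d F ∈ homogIdeal I :=
  homogeneousComponent_mem_of_mem (Ideal.homogeneous_span _ _ <| by
    rintro _ ⟨g, _, rfl⟩
    exact ⟨g.totalDegree, (mem_homogeneousSubmodule _ _).mpr (homogenize_isHomogeneous g)⟩) hF d

theorem homogIdeal_le_comap (I : Ideal (LaurentPoly K n)) :
    homogIdeal I ≤ I.comap (dehomogenize K n) :=
  Ideal.span_le.mpr fun _ ⟨g, hg, hF⟩ => by
    rw [hF, SetLike.mem_coe, Ideal.mem_comap, dehomogenize_homogenize]
    exact hg

end Homogenization

namespace ValSetup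

open MvPolynomial

variable {K 𝕜 : Type} [Field K] [Field 𝕜] (V : ValSetup K 𝕜) {n : ℕ}

theorem homogeneousComponent_initialForm {m : ℕ} (v : Fin m → ℝ) (F : MvPolynomial (Fin m) K)
    (d : ℕ) :
    homogeneousComponent d (V.initialForm v F) = 0 ∨
      homogeneousComponent d (V.initialForm v F) = V.initialForm v (homogeneousComponent d F) := by
  simp only [homogeneousComponent_eq_ofCoeff_filter]
  exact V.initialTerms_filter _ F

theorem dehomogenize_initialForm {F : MvPolynomial (Fin (n + 1)) K} {d : ℕ}
    (hF : F.IsHomogeneous d) (w : Fin n → ℝ) :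
    dehomogenize 𝕜 n (V.initialForm (Fin.cons 0 w) F) = V.initialFormL w (dehomogenize K n F) := by
  rw [dehomogenize_eq_mapDomain, dehomogenize_eq_mapDomain]
  refine (V.initialTerms_mapDomain (c := 0) ((tailExponent_injOn d).mono fun u hu => ?_)
    fun u _ => by rw [dotN_cons_zero, add_zero]).symm
  rw [Set.mem_ofPred_eq, Finsupp.degree_eq_weight_one]
  exact hF (mem_support_iff.mp hu)

theorem initialFormL_single_mul (w : Fin n → ℝ) (a : Fin n → ℤ) (f : LaurentPoly K n) :
    V.initialFormL w (AddMonoidAlgebra.single a 1 * f)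
      = AddMonoidAlgebra.single a 1 * V.initialFormL w f := by
  rw [AddMonoidAlgebra.single_one_mul_eq_mapDomain, AddMonoidAlgebra.single_one_mul_eq_mapDomain]
  exact V.initialTerms_mapDomain (add_right_injective a).injOn
    fun u _ => by rw [dotZ_add, add_comm]

theorem dehomogenize_initialForm_mem {I : Ideal (LaurentPoly K n)}
    {F : MvPolynomial (Fin (n + 1)) K} (hF : F ∈ homogIdeal I) (w : Fin n → ℝ) :
    dehomogenize 𝕜 n (V.initialForm (Fin.cons 0 w) F) ∈ V.initialIdealL w I := by
  rw [← sum_homogeneousComponent (V.initialForm _ F), map_sum]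
  refine Ideal.sum_mem _ fun d _ => ?_
  rcases V.homogeneousComponent_initialForm (Fin.cons 0 w) F d with h | h
  · rw [h, map_zero]
    exact zero_mem _
  · rw [h, V.dehomogenize_initialForm (homogeneousComponent_isHomogeneous d F)]
    exact Ideal.subset_span
      ⟨_, homogIdeal_le_comap I (homogeneousComponent_mem_homogIdeal hF d), rfl⟩

end ValSetup

theorem dehomogenize_initialIdeal_general {K 𝕜 : Type} [Field K] [Field 𝕜] (V : ValSetup K 𝕜)
    {n : ℕ} (I : Ideal (LaurentPoly K n)) (w : Fin n → ℝ) :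
    Ideal.map (dehomogenize 𝕜 n) (V.initialIdeal (Fin.cons 0 w) (homogIdeal I))
      = V.initialIdealL w I := by
  rw [ValSetup.initialIdealL, ValSetup.initialIdeal, Ideal.map_span]
  apply le_antisymm <;> rw [Ideal.span_le]
  · rintro _ ⟨_, ⟨F, hF, rfl⟩, rfl⟩
    exact V.dehomogenize_initialForm_mem hF w
  · rintro _ ⟨f, hf, rfl⟩
    obtain ⟨a, g, hg⟩ := exists_polyToLaurent_eq_single_mul f
    have hgI : homogenize g ∈ homogIdeal I :=
      Ideal.subset_span ⟨g, hg ▸ I.mul_mem_left _ hf, rfl⟩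
    rw [SetLike.mem_coe, ← Ideal.unit_mul_mem_iff_mem _ (AddMonoidAlgebra.isUnit_single_one a),
      ← V.initialFormL_single_mul, ← hg, ← dehomogenize_homogenize,
      ← V.dehomogenize_initialForm (homogenize_isHomogeneous g)]
    exact Ideal.subset_span ⟨_, ⟨_, hgI, rfl⟩, rfl⟩

/-- (See Proposition 2.6.2 of [Maclagan–Sturmfels].)  For an ideal
`I ⊆ K[x_1^{±1},…,x_n^{±1}]` with homogenization `I^h ⊆ K[x_0,…,x_n]` of
`I ∩ K[x_1,…,x_n]`, and `w ∈ Γ^n`, setting `x_0 = 1` in `in_{(0,w)}(I^h)` yields `in_w(I)`,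
as ideals of `𝕜[x_1^{±1},…,x_n^{±1}]`. -/
theorem dehomogenize_initialIdeal {K 𝕜 : Type} [Field K] [Field 𝕜] (V : ValSetup K 𝕜)
    (hdense : Dense V.Gamma) (hQ : ∀ q : ℚ, (q : ℝ) ∈ V.Gamma) {n : ℕ}
    (I : Ideal (LaurentPoly K n)) (w : Fin n → ℝ) (hw : ∀ i, w i ∈ V.Gamma) :
    Ideal.map (dehomogenize 𝕜 n) (V.initialIdeal (Fin.cons 0 w) (homogIdeal I))
      = V.initialIdealL w I :=
  dehomogenize_initialIdeal_general V I w
end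
end
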